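/- Let 1<p<∞, p'=p/(p−1), and s,t,q,Q∈ℝ. Suppose that either (s+t≤−1 and Q≤q) or s+t+(Q−q)/p ≤ −1. Then for every measurable function ω:𝔹→(0,∞), at least one of the two integrals ∫_𝔹 ω dμ_{Q+pt} and ∫_𝔹 ω^{−1/(p−1)} dμ_{q+p'(s−q)} is infinite. -/

import Mathlib

open MeasureTheory Complex
open scoped ENNReal NNReal

noncomputable section

/-- `ℂ^N` with the Euclidean norm. -/
abbrev EN (N : ℕ) := EuclideanSpace ℂ (Fin N)

instance (N : ℕ) : MeasurableSpace (EN N) := MeasurableSpace.comap WithLp.ofLp MeasurableSpace.pi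
instance (N : ℕ) : BorelSpace (EN N) := PiLp.borelSpace 2

/-- Lebesgue measure on `ℂ^N`. -/
def volEN (N : ℕ) : Measure (EN N) :=
  Measure.map (WithLp.toLp 2) (Measure.pi fun _ : Fin N => (volume : Measure ℂ))

/-- The Hermitian pairing `⟨z,w⟩ = ∑ z_j conj (w_j)`. -/
def bInner {N : ℕ} (z w : EN N) : ℂ := ∑ j, z j * (starRingEnd ℂ) (w j)

/-- The open unit ball `𝔹` of `ℂ^N`. -/
def ball01 (N : ℕ) : Set (EN N) := Metric.ball 0 1

/-- Lebesgue measure on the unit ball, normalized so that `μ(𝔹) = 1`. -/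
def muB (N : ℕ) : Measure (EN N) :=
  (volEN N (Metric.ball (0 : EN N) 1))⁻¹ • (volEN N).restrict (Metric.ball (0 : EN N) 1)

/-- The weighted measure `dμ_q = (1-|z|²)^q dμ`. -/
def muW (N : ℕ) (q : ℝ) : Measure (EN N) :=
  (muB N).withDensity fun z => ENNReal.ofReal ((1 - ‖z‖ ^ 2) ^ q)

/-- The Bergman–Besov kernel `K_a`. -/
def kernelK (N : ℕ) (a : ℝ) (z w : EN N) : ℂ :=
  if -((N : ℝ) + 1) < a then
    (1 - bInner z w) ^ (-((N : ℂ) + 1 + (a : ℂ)))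
  else
    ∑' k : ℕ, ((Nat.factorial k : ℂ)
        / ((Real.Gamma ((1 - (N : ℝ) - a) + k) / Real.Gamma (1 - (N : ℝ) - a) : ℝ) : ℂ))
      * bInner z w ^ k

/-- The operator `T_{a,b}`. -/
def Tab (N : ℕ) (a b : ℝ) (f : EN N → ℂ) (z : EN N) : ℂ :=
  ∫ w, kernelK N a z w * f w * (((1 - ‖w‖ ^ 2) ^ b : ℝ) : ℂ) ∂(muB N)

/-- The operator `P_{s,t}`. -/
def Pop (N : ℕ) (s t : ℝ) (f : EN N → ℂ) (z : EN N) : ℂ :=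
  (((1 - ‖z‖ ^ 2) ^ t : ℝ) : ℂ) * Tab N (s + t) s f z

/-- The positive operator `S_{a,b}`. -/
def Sop (N : ℕ) (a b : ℝ) (f : EN N → ℂ) (z : EN N) : ℝ≥0∞ :=
  ∫⁻ w, ENNReal.ofReal (‖kernelK N a z w‖ * ‖f w‖ * (1 - ‖w‖ ^ 2) ^ b) ∂(muB N)

/-- Absolute convergence of the integral defining `T_{a,b} f (z)`. -/
def TIntegrable (N : ℕ) (a b : ℝ) (f : EN N → ℂ) (z : EN N) : Prop :=
  Integrable (fun w => kernelK N a z w * f w * (((1 - ‖w‖ ^ 2) ^ b : ℝ) : ℂ)) (muB N)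

/-- `∫_𝔹 |f|^p ω dμ_q`. -/
def wLp (N : ℕ) (p q : ℝ) (ω : EN N → ℝ) (f : EN N → ℂ) : ℝ≥0∞ :=
  ∫⁻ z, ENNReal.ofReal (‖f z‖ ^ p * ω z) ∂(muW N q)

/-- A weight: positive on `𝔹` and locally integrable there. -/
def IsWeight (N : ℕ) (ω : EN N → ℝ) : Prop :=
  Measurable ω ∧ (∀ z ∈ ball01 N, 0 < ω z) ∧ LocallyIntegrableOn ω (ball01 N) (volEN N)

/-- `T_{a,b}` is well defined and continuous from `L^p(ω dμ_q)` to `L^p(ω dμ_Q)`. -/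
def TBounded (N : ℕ) (p a b q Q : ℝ) (ω : EN N → ℝ) : Prop :=
  (∀ f : EN N → ℂ, Measurable f → wLp N p q ω f < ⊤ → ∀ z ∈ ball01 N, TIntegrable N a b f z) ∧
  ∃ C : ℝ, ∀ f : EN N → ℂ, Measurable f → wLp N p q ω f < ⊤ →
    wLp N p Q ω (Tab N a b f) ≤ ENNReal.ofReal C * wLp N p q ω f

/-- `P_{s,t}` is well defined and continuous from `L^p(ω dμ_q)` to `L^p(ω dμ_Q)`. -/
def PBounded (N : ℕ) (p s t q Q : ℝ) (ω : EN N → ℝ) : Prop :=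
  (∀ f : EN N → ℂ, Measurable f → wLp N p q ω f < ⊤ → ∀ z ∈ ball01 N,
      TIntegrable N (s + t) s f z) ∧
  ∃ C : ℝ, ∀ f : EN N → ℂ, Measurable f → wLp N p q ω f < ⊤ →
    wLp N p Q ω (Pop N s t f) ≤ ENNReal.ofReal C * wLp N p q ω f

/-- `S_{a,b}` is well defined and continuous from `L^p(ω dμ_q)` to `L^p(ω dμ_Q)`. -/
def SBounded (N : ℕ) (p a b q Q : ℝ) (ω : EN N → ℝ) : Prop :=
  (∀ f : EN N → ℂ, Measurable f → wLp N p q ω f < ⊤ → ∀ z ∈ ball01 N, Sop N a b f z < ⊤) ∧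
  ∃ C : ℝ, ∀ f : EN N → ℂ, Measurable f → wLp N p q ω f < ⊤ →
    ∫⁻ z, Sop N a b f z ^ p * ENNReal.ofReal (ω z) ∂(muW N Q) ≤
      ENNReal.ofReal C * wLp N p q ω f

/-- The pseudo-distance `d(z,w) = ||z|-|w|| + |1 - ⟨z,w⟩/(|z||w|)|`. -/
def pd {N : ℕ} (z w : EN N) : ℝ :=
  |‖z‖ - ‖w‖| + ‖1 - bInner z w / ((‖z‖ : ℂ) * (‖w‖ : ℂ))‖

/-- The pseudoball `B(ζ,R)`. -/
def pball (N : ℕ) (ζ : EN N) (R : ℝ) : Set (EN N) := {z ∈ ball01 N | pd z ζ < R}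

/-- The maximal function `m'_{a,b}`. -/
def mMax' (N : ℕ) (a b : ℝ) (f : EN N → ℂ) (z : EN N) : ℝ≥0∞ :=
  ⨆ (ζ : EN N) (_ : ‖ζ‖ < 1) (R : ℝ) (_ : 1 - ‖ζ‖ < R) (_ : z ∈ pball N ζ R),
    ENNReal.ofReal (R ^ (-((N : ℝ) + 1 + a))) *
      ∫⁻ w in pball N ζ R, ENNReal.ofReal (‖f w‖ * (1 - ‖w‖ ^ 2) ^ b) ∂(muB N)

/-- The maximal function `m_{a,b}`. -/
def mMax (N : ℕ) (a b : ℝ) (f : EN N → ℂ) (z : EN N) : ℝ≥0∞ :=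
  ⨆ (ζ : EN N) (_ : ‖ζ‖ < 1) (R : ℝ) (_ : 1 - ‖ζ‖ < R) (_ : z ∈ pball N ζ R),
    (muW N a (pball N ζ R))⁻¹ *
      ∫⁻ w in pball N ζ R, ENNReal.ofReal (‖f w‖ * (1 - ‖w‖ ^ 2) ^ b) ∂(muB N)

/-- Normalizing factor in the Békollé–Bonami type class `D_p^{s,t,q,Q}`. -/
def Dnorm (N : ℕ) (p s t q Q : ℝ) (ζ : EN N) (R : ℝ) : ℝ≥0∞ :=
  if -1 < s + t then (muW N (s + t + (Q - q) / p) (pball N ζ R))⁻¹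
  else ENNReal.ofReal (R ^ (-((N : ℝ) + 1 + s + t + (Q - q) / p)))

/-- The `D_p^{s,t,q,Q}` characteristic of the weight `ω`. -/
def Dconst (N : ℕ) (p s t q Q : ℝ) (ω : EN N → ℝ) : ℝ≥0∞ :=
  ⨆ (ζ : EN N) (_ : ‖ζ‖ < 1) (R : ℝ) (_ : 1 - ‖ζ‖ < R),
    (Dnorm N p s t q Q ζ R *
        ∫⁻ z in pball N ζ R, ENNReal.ofReal (ω z) ∂(muW N (Q + p * t))) *
    (Dnorm N p s t q Q ζ R *
        ∫⁻ z in pball N ζ R, ENNReal.ofReal (ω z ^ (-(1 / (p - 1))))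
          ∂(muW N (q + (p / (p - 1)) * (s - q)))) ^ (p - 1)

/-! The proof is Hölder's inequality applied to `ω^{1/p} u^{A/p} · ω^{-1/p} u^{B/p'}` with
`u(z) = 1 - |z|²`, `A = Q + pt`, `B = q + p'(s - q)`: the product is `u^α` with
`α = A/p + B/p' = s + t + (Q - q)/p ≤ -1`, and `∫_𝔹 u^α dμ = ∞` because in polar coordinates
this is `∫_0^1 r^{2N-1} (1 - r²)^α dr`, which diverges like `∫ dr / (1 - r)`. -/

open Set Metric

lemma one_sub_norm_sq_pos {E : Type*} [SeminormedAddCommGroup E] {x : E} (hx : x ∈ ball 0 1) :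
    0 < 1 - ‖x‖ ^ 2 := by
  have := mem_ball_zero_iff.1 hx
  nlinarith [norm_nonneg x]

lemma not_integrableOn_Ioo_pow_mul_one_sub_sq_rpow (n : ℕ) {α : ℝ} (hα : α ≤ -1) :
    ¬ IntegrableOn (fun y : ℝ => y ^ n * (1 - y ^ 2) ^ α) (Ioo 0 1) := by
  intro h
  have hbound : ∀ y ∈ Ioo (1 / 2 : ℝ) 1,
      ‖(y - 1)⁻¹‖ ≤ 2 ^ (n + 1) * (y ^ n * (1 - y ^ 2) ^ α) := by
    rintro y ⟨hy₁, hy₂⟩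
    have hu : 0 < 1 - y ^ 2 := by nlinarith
    have hyn : (1 / 2 : ℝ) ^ n ≤ y ^ n := pow_le_pow_left₀ (by norm_num) hy₁.le n
    have hrpow : (1 - y ^ 2)⁻¹ ≤ (1 - y ^ 2) ^ α := by
      rw [← Real.rpow_neg_one]
      exact Real.rpow_le_rpow_of_exponent_ge hu (by nlinarith) hα
    have hinv : (1 - y)⁻¹ ≤ 2 * (1 - y ^ 2)⁻¹ := by
      rw [inv_le_comm₀ (by linarith) (by positivity), mul_inv, inv_inv]
      nlinarith
    rw [Real.norm_eq_abs, abs_inv, abs_of_neg (by linarith), neg_sub]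
    calc (1 - y)⁻¹ ≤ 2 * (1 - y ^ 2)⁻¹ := hinv
      _ = 2 ^ (n + 1) * ((1 / 2) ^ n * (1 - y ^ 2)⁻¹) := by
        have h2 : (2 : ℝ) ^ n * (1 / 2) ^ n = 1 := by rw [← mul_pow]; norm_num
        linear_combination (-2 * (1 - y ^ 2)⁻¹) * h2
      _ ≤ 2 ^ (n + 1) * (y ^ n * (1 - y ^ 2) ^ α) := by gcongr
  have hsub : IntegrableOn (fun y : ℝ => (y - 1)⁻¹) (Ioo (1 / 2) 1) :=
    ((h.mono_set (Ioo_subset_Ioo_left (by norm_num))).const_mul _).mono'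
      (by fun_prop) ((ae_restrict_iff' measurableSet_Ioo).2 (.of_forall hbound))
  have := (intervalIntegrable_iff_integrableOn_Ioo_of_le (by norm_num)).2 hsub
  norm_num [intervalIntegrable_sub_inv_iff] at this

section Polar

variable {E : Type*} [NormedAddCommGroup E] [NormedSpace ℝ E] [FiniteDimensional ℝ E]
  [Nontrivial E] [MeasurableSpace E] [BorelSpace E] (μ : Measure E) [μ.IsAddHaarMeasure]

lemma setLIntegral_ball_one_sub_norm_sq_rpow_eq_top {α : ℝ} (hα : α ≤ -1) :
    ∫⁻ x in ball (0 : E) 1, ENNReal.ofReal ((1 - ‖x‖ ^ 2) ^ α) ∂μ = ⊤ := by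
  have hpos : 0 ≤ᵐ[μ.restrict (ball 0 1)] fun x : E => (1 - ‖x‖ ^ 2) ^ α :=
    ae_restrict_of_forall_mem measurableSet_ball fun x hx =>
      Real.rpow_nonneg (one_sub_norm_sq_pos hx).le _
  rw [← not_ne_iff, lintegral_ofReal_ne_top_iff_integrable
    (Measurable.aestronglyMeasurable (by fun_prop)) hpos, ← IntegrableOn,
    integrableOn_fun_norm_addHaar μ (f := fun y => (1 - y ^ 2) ^ α)]
  simpa only [smul_eq_mul] using
    not_integrableOn_Ioo_pow_mul_one_sub_sq_rpow (Module.finrank ℝ E - 1) hα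

end Polar

instance isAddHaarMeasure_volEN (N : ℕ) : (volEN N).IsAddHaarMeasure :=
  (PiLp.continuousLinearEquiv 2 ℂ (fun _ : Fin N => ℂ)).symm.isAddHaarMeasure_map _

lemma ae_muB_mem_ball01 (N : ℕ) : ∀ᵐ z ∂(muB N), z ∈ ball01 N :=
  Measure.ae_smul_measure (ae_restrict_mem measurableSet_ball) _

lemma lintegral_muB_one_sub_norm_sq_rpow_eq_top {N : ℕ} (hN : 1 ≤ N) {α : ℝ} (hα : α ≤ -1) :
    ∫⁻ z, ENNReal.ofReal ((1 - ‖z‖ ^ 2) ^ α) ∂(muB N) = ⊤ := by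
  have : Nonempty (Fin N) := ⟨⟨0, hN⟩⟩
  rw [muB, lintegral_smul_measure, setLIntegral_ball_one_sub_norm_sq_rpow_eq_top _ hα,
    smul_eq_mul, ENNReal.mul_top (ENNReal.inv_ne_zero.2 measure_ball_lt_top.ne)]

lemma lintegral_rpow_le_weighted_holder {X : Type*} [MeasurableSpace X] (μ : Measure X)
    {p q : ℝ} (hpq : p.HolderConjugate q) {ω u : X → ℝ} (hω : Measurable ω) (hu : Measurable u)
    (hpos : ∀ᵐ x ∂μ, 0 < ω x ∧ 0 < u x) (a b : ℝ) :
    ∫⁻ x, ENNReal.ofReal (u x ^ (a / p + b / q)) ∂μ ≤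
      (∫⁻ x, ENNReal.ofReal (ω x) ∂μ.withDensity fun x => ENNReal.ofReal (u x ^ a)) ^ (1 / p) *
      (∫⁻ x, ENNReal.ofReal (ω x ^ (-(q / p)))
        ∂μ.withDensity fun x => ENNReal.ofReal (u x ^ b)) ^ (1 / q) := by
  set F : X → ℝ≥0∞ := fun x => ENNReal.ofReal (ω x ^ (1 / p) * u x ^ (a / p))
  set G : X → ℝ≥0∞ := fun x => ENNReal.ofReal (ω x ^ (-(1 / p)) * u x ^ (b / q))
  have hF : ∫⁻ x, F x ^ p ∂μ =
      ∫⁻ x, ENNReal.ofReal (ω x) ∂μ.withDensity fun x => ENNReal.ofReal (u x ^ a) := by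
    rw [lintegral_withDensity_eq_lintegral_mul _ (by fun_prop) (by fun_prop)]
    refine lintegral_congr_ae (hpos.mono fun x ⟨hωx, hux⟩ => ?_)
    dsimp only [F]
    rw [Pi.mul_apply, ← ENNReal.ofReal_mul (by positivity), mul_comm,
      ENNReal.ofReal_rpow_of_nonneg (by positivity) hpq.nonneg,
      Real.mul_rpow (by positivity) (by positivity), ← Real.rpow_mul hωx.le,
      ← Real.rpow_mul hux.le, one_div_mul_cancel hpq.ne_zero, div_mul_cancel₀ _ hpq.ne_zero,
      Real.rpow_one]
  have hG : ∫⁻ x, G x ^ q ∂μ = ∫⁻ x, ENNReal.ofReal (ω x ^ (-(q / p)))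
      ∂μ.withDensity fun x => ENNReal.ofReal (u x ^ b) := by
    rw [lintegral_withDensity_eq_lintegral_mul _ (by fun_prop) (by fun_prop)]
    refine lintegral_congr_ae (hpos.mono fun x ⟨hωx, hux⟩ => ?_)
    dsimp only [G]
    rw [Pi.mul_apply, ← ENNReal.ofReal_mul (by positivity), mul_comm,
      ENNReal.ofReal_rpow_of_nonneg (by positivity) hpq.symm.nonneg,
      Real.mul_rpow (by positivity) (by positivity), ← Real.rpow_mul hωx.le,
      ← Real.rpow_mul hux.le, div_mul_cancel₀ _ hpq.symm.ne_zero, neg_mul, one_div_mul_eq_div]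
  have hFG : ∫⁻ x, (F * G) x ∂μ = ∫⁻ x, ENNReal.ofReal (u x ^ (a / p + b / q)) ∂μ := by
    refine lintegral_congr_ae (hpos.mono fun x ⟨hωx, hux⟩ => ?_)
    dsimp only [F, G, Pi.mul_apply]
    rw [← ENNReal.ofReal_mul (by positivity), Real.rpow_add hux,
      mul_mul_mul_comm, ← Real.rpow_add hωx, add_neg_cancel, Real.rpow_zero, one_mul]
  rw [← hFG, ← hF, ← hG]
  exact ENNReal.lintegral_mul_le_Lp_mul_Lq μ hpq (by fun_prop) (by fun_prop)

/-- If (`s+t ≤ -1` and `Q ≤ q`) or `s+t+(Q-q)/p ≤ -1`, then for every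
measurable `ω : 𝔹 → (0,∞)`, at least one of `∫ ω dμ_{Q+pt}` and
`∫ ω^{-1/(p-1)} dμ_{q+p'(s-q)}` is infinite. -/
theorem stmt14 (N : ℕ) (hN : 1 ≤ N) (p p' s t q Q : ℝ)
    (hp : 1 < p) (hp' : p' = p / (p - 1))
    (hcase : (s + t ≤ -1 ∧ Q ≤ q) ∨ s + t + (Q - q) / p ≤ -1)
    (ω : EN N → ℝ) (hmeas : Measurable ω) (hpos : ∀ z ∈ ball01 N, 0 < ω z) :
    (∫⁻ z, ENNReal.ofReal (ω z) ∂(muW N (Q + p * t))) = ⊤ ∨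
    (∫⁻ z, ENNReal.ofReal (ω z ^ (-(1 / (p - 1)))) ∂(muW N (q + p' * (s - q)))) = ⊤ := by
  have hpp' : p.HolderConjugate p' := hp' ▸ .conjExponent hp
  have hp1 : p - 1 ≠ 0 := by linarith
  have hα : (Q + p * t) / p + (q + p' * (s - q)) / p' ≤ -1 := by
    have hp0 : 0 < p := by linarith
    have hexp : (Q + p * t) / p + (q + p' * (s - q)) / p' = s + t + (Q - q) / p := by
      rw [hp']; field_simp; ring
    rcases hcase with ⟨hst, hQq⟩ | h
    · rw [hexp]; linarith [div_nonpos_of_nonpos_of_nonneg (sub_nonpos.2 hQq) hp0.le]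
    · rwa [hexp]
  have hdual : -(p' / p) = -(1 / (p - 1)) := by
    rw [hp']; field_simp
  have hweights : ∀ᵐ z ∂(muB N), 0 < ω z ∧ 0 < 1 - ‖z‖ ^ 2 :=
    (ae_muB_mem_ball01 N).mono fun z hz => ⟨hpos z hz, one_sub_norm_sq_pos hz⟩
  have holder := lintegral_rpow_le_weighted_holder (muB N) hpp' hmeas (by fun_prop) hweights
    (Q + p * t) (q + p' * (s - q))
  rw [lintegral_muB_one_sub_norm_sq_rpow_eq_top hN hα, top_le_iff, hdual] at holder
  by_contra! hfin
  exact (ENNReal.mul_lt_top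
    (ENNReal.rpow_lt_top_of_nonneg (one_div_nonneg.2 hpp'.nonneg) hfin.1)
    (ENNReal.rpow_lt_top_of_nonneg (one_div_nonneg.2 hpp'.symm.nonneg) hfin.2)).ne holder
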